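/- arXiv:2202.03295 — 2 statements merged into one kernel-verified Lean document; each statement's English description precedes it below -/
import Mathlib

section
/- Let τ > 0, q > 0 and m ∈ ℝ with m² ≤ q. On Ω = ℝ × ℝ equipped with the product measure μ = γ ⊗ γ of two standard Gaussians, define λ(ω₁,ω₂) = √q·ω₁ and ν(ω₁,ω₂) = (m/√q)·ω₁ + √(1 − m²/q)·ω₂, so that (ν, λ) is centered jointly Gaussian with Var ν = 1, Var λ = q and Cov(ν,λ) = m. Let F be the σ-algebra generated by λ. Then μ-almost everywhere, μ[σ⋆(ν/τ) | F] = σ⋆( (m/q)·λ / √(τ² + 1 − m²/q) ). (Consequently, the calibration of the logistic classifier σ(λ) with respect to the teacher σ⋆(ν/τ) satisfies Δ_p = p − σ⋆( (m/q)·log(p/(1−p)) / √(1 − m²/q + τ²) ) for every p ∈ (0,1).) -/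
open MeasureTheory ProbabilityTheory Real

/-- The error function `erf x = (2/√π) ∫₀ˣ e^{-t²} dt`. -/
noncomputable def erf (x : ℝ) : ℝ := 2 / Real.sqrt Real.pi * ∫ t in (0:ℝ)..x, Real.exp (-t ^ 2)

/-- The complementary error function. -/
noncomputable def erfc (x : ℝ) : ℝ := 1 - erf x

/-- The standard Gaussian CDF `σ⋆(x) = (1/2) erfc(-x/√2)`. -/
noncomputable def sigmaStar (x : ℝ) : ℝ := (1 / 2) * erfc (-x / Real.sqrt 2)

/-!
Write `b = √(1 - m²/q)`, so that `ν = (m/q)·λ + b·ω₂` with `ω₂` independent of `λ`. Conditioning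
on `λ` therefore amounts to integrating out `ω₂` with `λ` frozen. Since `σ⋆` is the CDF of a
standard Gaussian `Z`, for `Y` an independent standard Gaussian
`E σ⋆(c + sY) = P(Z - sY ≤ c) = σ⋆(c / √(1 + s²))`, because `Z - sY ∼ N(0, 1 + s²)`.
-/

open Set
open scoped NNReal

lemma erf_neg (x : ℝ) : erf (-x) = -erf x := by
  have h := intervalIntegral.integral_comp_neg (a := 0) (b := x) (fun t => Real.exp (-t ^ 2))
  simp only [even_two, Even.neg_pow, neg_zero] at h
  rw [erf, erf, intervalIntegral.integral_symm, ← h]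
  ring

lemma gaussianPDFReal_zero_neg (v : ℝ≥0) (x : ℝ) :
    gaussianPDFReal 0 v (-x) = gaussianPDFReal 0 v x := by
  simp [gaussianPDFReal]

lemma setIntegral_Iic_zero_gaussianPDFReal_zero {v : ℝ≥0} (hv : v ≠ 0) :
    ∫ t in Iic 0, gaussianPDFReal 0 v t = 1 / 2 := by
  have hsymm := integral_comp_neg_Iic 0 (gaussianPDFReal 0 v)
  simp only [gaussianPDFReal_zero_neg, neg_zero] at hsymm
  have htotal := integral_add_compl (measurableSet_Iic (a := (0:ℝ)))
    (integrable_gaussianPDFReal 0 v)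
  rw [compl_Iic, integral_gaussianPDFReal_eq_one 0 hv, ← hsymm] at htotal
  linarith

lemma intervalIntegral_gaussianPDFReal_zero_one (x : ℝ) :
    ∫ t in (0:ℝ)..x, gaussianPDFReal 0 1 t = erf (x / √2) / 2 := by
  have hexp (t : ℝ) : gaussianPDFReal 0 1 t = (√2 * √π)⁻¹ * Real.exp (-(t / √2) ^ 2) := by
    rw [gaussianPDFReal, div_pow, sq_sqrt zero_le_two, ← Real.sqrt_mul zero_le_two]
    simp [neg_div]
  simp_rw [hexp]
  rw [intervalIntegral.integral_const_mul,
    intervalIntegral.integral_comp_div (fun u => Real.exp (-u ^ 2)) (by positivity : √2 ≠ 0),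
    zero_div, smul_eq_mul, erf]
  field_simp

lemma sigmaStar_eq_cdf : sigmaStar = cdf (gaussianReal 0 1) := by
  ext x
  have hsplit := intervalIntegral.integral_Iic_sub_Iic (f := gaussianPDFReal 0 1)
    (a := 0) (b := x) (integrable_gaussianPDFReal 0 1).integrableOn
    (integrable_gaussianPDFReal 0 1).integrableOn
  rw [setIntegral_Iic_zero_gaussianPDFReal_zero one_ne_zero,
    intervalIntegral_gaussianPDFReal_zero_one] at hsplit
  rw [cdf_eq_real, measureReal_def, gaussianReal_apply_eq_integral _ one_ne_zero,
    ENNReal.toReal_ofReal (setIntegral_nonneg measurableSet_Iic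
      fun t _ => gaussianPDFReal_nonneg _ _ t),
    sigmaStar, erfc, neg_div, erf_neg]
  linarith

lemma measurable_sigmaStar : Measurable sigmaStar :=
  sigmaStar_eq_cdf ▸ (cdf (gaussianReal 0 1)).mono.measurable

lemma integrable_sigmaStar_comp {Ω : Type*} {mΩ : MeasurableSpace Ω} {μ : Measure Ω}
    [IsFiniteMeasure μ] {g : Ω → ℝ} (hg : AEMeasurable g μ) :
    Integrable (fun ω => sigmaStar (g ω)) μ := by
  refine .of_bound (measurable_sigmaStar.comp_aemeasurable hg).aestronglyMeasurable 1
    (ae_of_all _ fun ω => ?_)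
  rw [sigmaStar_eq_cdf, Real.norm_of_nonneg (cdf_nonneg _ _)]
  exact cdf_le_one _ _

lemma cdf_gaussianReal_zero_mean {v : ℝ≥0} (hv : v ≠ 0) (c : ℝ) :
    cdf (gaussianReal 0 v) c = cdf (gaussianReal 0 1) (c / √v) := by
  have hsqrt : 0 < √(v : ℝ) := Real.sqrt_pos.mpr (by positivity)
  have hmap : (gaussianReal 0 1).map (√(v : ℝ) * ·) = gaussianReal 0 v := by
    rw [gaussianReal_map_const_mul, mul_zero, mul_one]
    congr 1
    ext
    simp
  rw [cdf_eq_real, cdf_eq_real, ← hmap, map_measureReal_apply (by fun_prop) measurableSet_Iic]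
  congr 1
  ext x
  simp [le_div_iff₀ hsqrt, mul_comm]

lemma map_add_mul_gaussianReal_prod (μ₁ μ₂ : ℝ) (v₁ v₂ : ℝ≥0) (s : ℝ) :
    ((gaussianReal μ₁ v₁).prod (gaussianReal μ₂ v₂)).map (fun p => p.1 + s * p.2)
      = gaussianReal (μ₁ + s * μ₂) (v₁ + ‖s‖₊ ^ 2 * v₂) := by
  have hfst : ((gaussianReal μ₁ v₁).prod (gaussianReal μ₂ v₂)).map (fun p => id p.1)
      = gaussianReal μ₁ v₁ := by
    simp
  have hsnd : ((gaussianReal μ₁ v₁).prod (gaussianReal μ₂ v₂)).map (fun p => s * p.2)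
      = gaussianReal (s * μ₂) (‖s‖₊ ^ 2 * v₂) := by
    rw [← Function.comp_def, ← Measure.map_map (measurable_const_mul s) measurable_snd]
    simp only [Measure.map_snd_prod, measure_univ, one_smul, gaussianReal_map_const_mul]
    congr 1
    ext
    simp
  exact gaussianReal_add_gaussianReal_of_indepFun
    (indepFun_prod measurable_id (measurable_const_mul s)) hfst hsnd

lemma integral_cdf_gaussianReal_add_mul (c s : ℝ) :
    ∫ y, cdf (gaussianReal 0 1) (c + s * y) ∂(gaussianReal 0 1)
      = cdf (gaussianReal 0 1) (c / √(1 + s ^ 2)) := by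
  set γ := gaussianReal 0 1
  have hslice (y : ℝ) : Iic (c + s * y)
      = (fun x => (x, y)) ⁻¹' ((fun p : ℝ × ℝ => p.1 + (-s) * p.2) ⁻¹' Iic c) := by
    ext x
    simp [neg_mul, ← sub_eq_add_neg]
  have hmeas : MeasurableSet ((fun p : ℝ × ℝ => p.1 + (-s) * p.2) ⁻¹' Iic c) :=
    (by fun_prop : Measurable fun p : ℝ × ℝ => p.1 + (-s) * p.2) measurableSet_Iic
  calc ∫ y, cdf γ (c + s * y) ∂γ
      = ((γ.prod γ).map (fun p => p.1 + (-s) * p.2)).real (Iic c) := by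
        rw [map_measureReal_apply (by fun_prop) measurableSet_Iic, measureReal_def,
          Measure.prod_apply_symm hmeas]
        simp_rw [cdf_eq_real, measureReal_def, hslice]
        exact integral_toReal (measurable_measure_prodMk_right hmeas).aemeasurable
          (ae_of_all _ fun y => measure_lt_top _ _)
    _ = cdf γ (c / √(1 + s ^ 2)) := by
        rw [map_add_mul_gaussianReal_prod, ← cdf_eq_real]
        simp only [mul_zero, add_zero]
        rw [cdf_gaussianReal_zero_mean (by positivity)]
        simp [γ]

lemma integral_sigmaStar_add_mul_div {τ : ℝ} (hτ : 0 < τ) (a b : ℝ) :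
    ∫ y, sigmaStar ((a + b * y) / τ) ∂(gaussianReal 0 1) = sigmaStar (a / √(τ ^ 2 + b ^ 2)) := by
  have hsplit (y : ℝ) : (a + b * y) / τ = a / τ + b / τ * y := by ring
  have hscale : √(τ ^ 2 + b ^ 2) = τ * √(1 + (b / τ) ^ 2) := by
    rw [← Real.sqrt_sq hτ.le, ← Real.sqrt_mul (sq_nonneg τ), Real.sqrt_sq hτ.le]
    congr 1
    field_simp
  simp_rw [hsplit, sigmaStar_eq_cdf, integral_cdf_gaussianReal_add_mul, hscale, div_div]

theorem condExp_comap_ae_eq_integral_of_indepFun {Ω β γ F : Type*} {mΩ : MeasurableSpace Ω}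
    {mβ : MeasurableSpace β} [MeasurableSpace γ] [StandardBorelSpace γ] [Nonempty γ]
    [NormedAddCommGroup F] [NormedSpace ℝ F] [CompleteSpace F]
    {μ : Measure Ω} [IsProbabilityMeasure μ] {X : Ω → β} {Y : Ω → γ} {f : β × γ → F}
    (hX : Measurable X) (hY : Measurable Y) (hXY : X ⟂ᵢ[μ] Y) (hf : StronglyMeasurable f)
    (hf_int : Integrable (fun ω => f (X ω, Y ω)) μ) :
    μ[fun ω => f (X ω, Y ω) | mβ.comap X] =ᵐ[μ] fun ω => ∫ y, f (X ω, y) ∂(μ.map Y) := by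
  have hcond : condDistrib Y X μ =ᵐ[μ.map X] Kernel.const β (μ.map Y) := by
    refine condDistrib_ae_eq_of_measure_eq_compProd X hY.aemeasurable ?_
    rw [Measure.compProd_const]
    exact (indepFun_iff_map_prod_eq_prod_map_map hX.aemeasurable hY.aemeasurable).mp hXY
  filter_upwards [condExp_prod_ae_eq_integral_condDistrib hX hY.aemeasurable hf hf_int,
    ae_of_ae_map hX.aemeasurable hcond] with ω hω hωX
  rw [hω, hωX, Kernel.const_apply]

theorem condexp_teacher_given_erm_general
    (τ q m : ℝ) (hτ : 0 < τ) (hm : m ^ 2 ≤ q)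
    (μ : Measure (ℝ × ℝ)) (hμ : μ = (gaussianReal 0 1).prod (gaussianReal 0 1))
    (lam ν : ℝ × ℝ → ℝ)
    (hlam : lam = fun ω => Real.sqrt q * ω.1)
    (hν : ν = fun ω => (m / Real.sqrt q) * ω.1 + Real.sqrt (1 - m ^ 2 / q) * ω.2)
    (F : MeasurableSpace (ℝ × ℝ))
    (hF : F = MeasurableSpace.comap lam (inferInstance : MeasurableSpace ℝ)) :
    μ[(fun ω => sigmaStar (ν ω / τ)) | F]
      =ᵐ[μ] fun ω => sigmaStar ((m / q) * lam ω / Real.sqrt (τ ^ 2 + 1 - m ^ 2 / q)) := by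
  subst hμ hlam hν hF
  set b := √(1 - m ^ 2 / q)
  have hb : b ^ 2 = 1 - m ^ 2 / q :=
    sq_sqrt (sub_nonneg.mpr (div_le_one_of_le₀ hm ((sq_nonneg m).trans hm)))
  have hcoef : m / q * √q = m / √q := by
    rw [div_mul_eq_mul_div, mul_div_assoc, Real.sqrt_div_self', mul_one_div]
  have hsplit (x y : ℝ) : m / √q * x + b * y = m / q * (√q * x) + b * y := by
    rw [← mul_assoc, hcoef]
  simp_rw [hsplit]
  let f : ℝ × ℝ → ℝ := fun p => sigmaStar ((m / q * p.1 + b * p.2) / τ)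
  have hf : Measurable f := measurable_sigmaStar.comp (by fun_prop)
  refine (condExp_comap_ae_eq_integral_of_indepFun (f := f) (by fun_prop) measurable_snd
    (indepFun_prod (measurable_const_mul _) measurable_id) hf.stronglyMeasurable
    (integrable_sigmaStar_comp (by fun_prop))).trans (ae_of_all _ fun ω => ?_)
  simp only [f, Measure.map_snd_prod, measure_univ, one_smul]
  rw [integral_sigmaStar_add_mul_div hτ, hb, add_sub_assoc]

/-- For a jointly Gaussian pair `(ν, λ)` with `Var ν = 1`, `Var λ = q`, `Cov(ν, λ) = m`,
realized on the product of two standard Gaussians, the conditional expectation of the teacher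
confidence `σ⋆(ν/τ)` given `λ` is `σ⋆((m/q)·λ / √(τ² + 1 − m²/q))`. -/
theorem condexp_teacher_given_erm
    (τ q m : ℝ) (hτ : 0 < τ) (hq : 0 < q) (hm : m ^ 2 ≤ q)
    (μ : Measure (ℝ × ℝ)) (hμ : μ = (gaussianReal 0 1).prod (gaussianReal 0 1))
    (lam ν : ℝ × ℝ → ℝ)
    (hlam : lam = fun ω => Real.sqrt q * ω.1)
    (hν : ν = fun ω => (m / Real.sqrt q) * ω.1 + Real.sqrt (1 - m ^ 2 / q) * ω.2)
    (F : MeasurableSpace (ℝ × ℝ))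
    (hF : F = MeasurableSpace.comap lam (inferInstance : MeasurableSpace ℝ)) :
    μ[(fun ω => sigmaStar (ν ω / τ)) | F]
      =ᵐ[μ] fun ω => sigmaStar ((m / q) * lam ω / Real.sqrt (τ ^ 2 + 1 - m ^ 2 / q)) :=
  condexp_teacher_given_erm_general τ q m hτ hm μ hμ lam ν hlam hν F hF
end

section
/- Let τ > 0, q_b ∈ (0,1], q_e > 0 and m ∈ ℝ with m² ≤ q_b·q_e. On Ω = ℝ³ equipped with the product measure μ = γ ⊗ γ ⊗ γ of three standard Gaussians, define λ_e(ω) = √q_e·ω₁, λ_b(ω) = (m/√q_e)·ω₁ + √(q_b − m²/q_e)·ω₂, and ν(ω) = λ_b(ω) + √(1 − q_b)·ω₃, so that (ν, λ_b, λ_e) is centered jointly Gaussian with covariance matrix [[1, q_b, m],[q_b, q_b, m],[m, m, q_e]] (up to symmetry, with Cov(ν,λ_b) = q_b, Cov(ν,λ_e) = Cov(λ_b,λ_e) = m). Let F be the σ-algebra generated by λ_e and set τ' := √(τ² + 1 − q_b). Then μ-almost everywhere, μ[σ⋆(ν/τ) | F] = μ[σ⋆(λ_b/τ') | F] = σ⋆(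 (m/q_e)·λ_e / √(τ² + 1 − m²/q_e) ). In particular, the calibration of the logistic classifier σ(λ_e) with respect to the teacher σ⋆(ν/τ) equals its calibration with respect to the Bayes-optimal classifier σ⋆(λ_b/τ'): Δ_p = Δ̃_p for all p ∈ (0,1). -/
/-!
`σ⋆` is the distribution function of `N(0,1)`, so for `t > 0` and independent standard Gaussians
`Z, Z'` one has `E_Z σ⋆((a + sZ)/t) = P(tZ' - sZ ≤ a) = σ⋆(a / √(t² + s²))`, Gaussians being
closed under convolution. Conditioning on `λ_e = √q_e ω₁` amounts to integrating out the
independent coordinates `ω₂, ω₃`; for the teacher this smooths twice, with variances `1 - q_b`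
and `q_b - m²/q_e`, for the Bayes confidence once, with variance `q_b - m²/q_e` on top of
`τ'² = τ² + 1 - q_b`. Both give total variance `τ² + 1 - m²/q_e`.
-/

open MeasureTheory ProbabilityTheory Real

open Set
open scoped NNReal

lemma sigmaStar_eq_half_add_integral (x : ℝ) :
    sigmaStar x = 1 / 2 + ∫ u in (0:ℝ)..x, gaussianPDFReal 0 1 u := by
  -- substitute `t = -u/√2` in the integral defining `erf (-x/√2)`
  have hc : -(√2)⁻¹ ≠ (0 : ℝ) := by simp
  have hsub := intervalIntegral.integral_comp_mul_left (fun t => exp (-t ^ 2)) hc (a := 0) (b := x)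
  simp only [mul_zero] at hsub
  have hpdf : ∀ u, gaussianPDFReal 0 1 u = (√(2 * π))⁻¹ * exp (-(-(√2)⁻¹ * u) ^ 2) := by
    intro u
    simp only [gaussianPDFReal_def, NNReal.coe_one, mul_one, sub_zero]
    rw [mul_pow, neg_sq, inv_pow, sq_sqrt zero_le_two]
    ring_nf
  simp_rw [hpdf, intervalIntegral.integral_const_mul, hsub]
  unfold sigmaStar erfc erf
  rw [show -x / √2 = -(√2)⁻¹ * x by ring, smul_eq_mul, sqrt_mul zero_le_two]
  field_simp
  ring

lemma measureReal_gaussianReal_Iic_zero {v : ℝ≥0} (hv : v ≠ 0) :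
    (gaussianReal 0 v).real (Iic 0) = 1 / 2 := by
  have := nullSingletonClass_gaussianReal (μ := 0) hv
  have hsymm : (gaussianReal 0 v).real (Iic 0) = (gaussianReal 0 v).real (Ici 0) := by
    conv_lhs => rw [← neg_zero, ← gaussianReal_map_neg]
    rw [map_measureReal_apply measurable_neg measurableSet_Iic]
    simp
  have hunion := measureReal_union_add_inter (μ := gaussianReal 0 v) (s := Iic (0:ℝ))
    (t := Ici 0) measurableSet_Ici
  have hzero : (gaussianReal 0 v).real {0} = 0 := by simp [measureReal_def]
  rw [Iic_union_Ici, Iic_inter_Ici, Icc_self, hzero, probReal_univ] at hunion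
  linarith

lemma cdf_gaussianReal_eq_half_add_integral (x : ℝ) :
    cdf (gaussianReal 0 1) x = 1 / 2 + ∫ u in (0:ℝ)..x, gaussianPDFReal 0 1 u := by
  have hIic : ∀ y, (gaussianReal 0 1).real (Iic y) = ∫ u in Iic y, gaussianPDFReal 0 1 u := by
    intro y
    rw [measureReal_def, gaussianReal_apply_eq_integral _ one_ne_zero, ENNReal.toReal_ofReal
      (setIntegral_nonneg measurableSet_Iic fun u _ => gaussianPDFReal_nonneg 0 1 u)]
  rw [cdf_eq_real, ← measureReal_gaussianReal_Iic_zero one_ne_zero, hIic, hIic,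
    ← intervalIntegral.integral_Iic_sub_Iic (integrable_gaussianPDFReal 0 1).integrableOn
      (integrable_gaussianPDFReal 0 1).integrableOn]
  ring

lemma sigmaStar_eq_cdf_gaussianReal (x : ℝ) : sigmaStar x = cdf (gaussianReal 0 1) x := by
  rw [sigmaStar_eq_half_add_integral, cdf_gaussianReal_eq_half_add_integral]

lemma integrable_sigmaStar_comp_s2 {α : Type*} [MeasurableSpace α] {μ : Measure α}
    [IsFiniteMeasure μ] {f : α → ℝ} (hf : Measurable f) :
    Integrable (fun x => sigmaStar (f x)) μ := by
  refine Integrable.of_bound (measurable_sigmaStar.comp hf).aestronglyMeasurable 1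
    (ae_of_all _ fun x => ?_)
  rw [sigmaStar_eq_cdf_gaussianReal, Real.norm_of_nonneg (cdf_nonneg _ _)]
  exact cdf_le_one _ _

lemma gaussianReal_zero_one_map_const_mul (c : ℝ) :
    (gaussianReal 0 1).map (c * ·) = gaussianReal 0 (.mk (c ^ 2) (sq_nonneg c)) := by
  rw [gaussianReal_map_const_mul, mul_zero, mul_one]

lemma cdf_gaussianReal_eq_sigmaStar {v : ℝ≥0} (hv : v ≠ 0) (x : ℝ) :
    cdf (gaussianReal 0 v) x = sigmaStar (x / √v) := by
  have hsv : 0 < √(v : ℝ) := sqrt_pos.mpr (by positivity)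
  have hmap : (gaussianReal 0 1).map (√(v : ℝ) * ·) = gaussianReal 0 v := by
    rw [gaussianReal_zero_one_map_const_mul]
    exact congrArg _ (NNReal.eq (sq_sqrt v.2))
  rw [cdf_eq_real, ← hmap, map_measureReal_apply (measurable_const_mul _) measurableSet_Iic,
    sigmaStar_eq_cdf_gaussianReal, cdf_eq_real]
  congr 1
  ext u
  simp [le_div_iff₀' hsv]

lemma integral_cdf_sub_eq_cdf_conv (μ ν : Measure ℝ) [IsProbabilityMeasure μ]
    [IsProbabilityMeasure ν] (a : ℝ) :
    ∫ u, cdf ν (a - u) ∂μ = cdf (μ ∗ ν) a := by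
  rw [cdf_eq_real, ← integral_indicator_one measurableSet_Iic,
    integral_conv ((integrable_const 1).indicator measurableSet_Iic)]
  congr 1
  ext u
  rw [cdf_eq_real, ← integral_indicator_one measurableSet_Iic]
  congr 1
  ext y
  simp only [indicator, mem_Iic, le_sub_iff_add_le', Pi.one_apply]

lemma integral_sigmaStar_affine (a s : ℝ) {t : ℝ} (ht : 0 < t) :
    ∫ z, sigmaStar ((a + s * z) / t) ∂(gaussianReal 0 1) = sigmaStar (a / √(t ^ 2 + s ^ 2)) := by
  have hvt : NNReal.mk (t ^ 2) (sq_nonneg t) ≠ 0 := by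
    rw [← NNReal.coe_ne_zero, NNReal.coe_mk]; positivity
  have hsum : NNReal.mk ((-s) ^ 2) (sq_nonneg _) + .mk (t ^ 2) (sq_nonneg t) ≠ 0 :=
    fun h => hvt (add_eq_zero.mp h).2
  calc ∫ z, sigmaStar ((a + s * z) / t) ∂(gaussianReal 0 1)
      = ∫ z, cdf (gaussianReal 0 (.mk (t ^ 2) (sq_nonneg t))) (a - -s * z) ∂(gaussianReal 0 1) := by
        simp_rw [cdf_gaussianReal_eq_sigmaStar hvt, NNReal.coe_mk, sqrt_sq ht.le, neg_mul,
          sub_neg_eq_add]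
    _ = ∫ u, cdf (gaussianReal 0 (.mk (t ^ 2) (sq_nonneg t))) (a - u)
          ∂((gaussianReal 0 1).map (-s * ·)) :=
        (integral_map (measurable_const_mul _).aemeasurable
          ((cdf _).mono.measurable.comp (measurable_const_sub a)).aestronglyMeasurable).symm
    _ = sigmaStar (a / √(t ^ 2 + s ^ 2)) := by
        rw [gaussianReal_zero_one_map_const_mul, integral_cdf_sub_eq_cdf_conv,
          gaussianReal_conv_gaussianReal, add_zero, cdf_gaussianReal_eq_sigmaStar hsum]
        simp only [NNReal.coe_add, NNReal.coe_mk, neg_sq, add_comm]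

lemma integral_sigmaStar_affine_prod (a b c : ℝ) {t : ℝ} (ht : 0 < t) :
    ∫ y, sigmaStar ((a + b * y.1 + c * y.2) / t) ∂((gaussianReal 0 1).prod (gaussianReal 0 1))
      = sigmaStar (a / √(t ^ 2 + c ^ 2 + b ^ 2)) := by
  rw [integral_prod _ (integrable_sigmaStar_comp_s2 (by fun_prop))]
  simp_rw [integral_sigmaStar_affine _ _ ht]
  rw [integral_sigmaStar_affine _ _ (by positivity), sq_sqrt (by positivity)]

lemma condExp_comap_fst_prod_ae_eq {α β F : Type*} [MeasurableSpace α] [MeasurableSpace β]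
    [StandardBorelSpace β] [Nonempty β] [NormedAddCommGroup F] [NormedSpace ℝ F] [CompleteSpace F]
    (ρ : Measure α) [IsFiniteMeasure ρ] (ν : Measure β) [IsProbabilityMeasure ν]
    {g : α × β → F} (hg : Integrable g (ρ.prod ν)) :
    (ρ.prod ν)[g | MeasurableSpace.comap Prod.fst ‹_›]
      =ᵐ[ρ.prod ν] fun ω => ∫ y, g (ω.1, y) ∂ν := by
  have hκ : condDistrib Prod.snd Prod.fst (ρ.prod ν)
      =ᵐ[(ρ.prod ν).map Prod.fst] Kernel.const α ν := by
    refine condDistrib_ae_eq_of_measure_eq_compProd Prod.fst measurable_snd.aemeasurable ?_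
    rw [Measure.map_fst_prod, measure_univ, one_smul, Measure.compProd_const]
    exact Measure.map_id
  have h := condExp_prod_ae_eq_integral_condDistrib' (μ := ρ.prod ν) (f := g) measurable_fst
    measurable_snd.aemeasurable (by simpa only [Prod.mk.eta, Measure.map_id'] using hg)
  simp only [Prod.mk.eta] at h
  filter_upwards [h, ae_of_ae_map measurable_fst.aemeasurable hκ] with ω hω hκω
  rw [hω, hκω, Kernel.const_apply]

theorem condexp_teacher_eq_condexp_bayes_given_erm_general
    (τ qb qe m : ℝ) (hτ : 0 < τ) (hqb1 : qb ≤ 1) (hqe : 0 < qe)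
    (hm : m ^ 2 ≤ qb * qe)
    (μ : Measure (ℝ × ℝ × ℝ))
    (hμ : μ = (gaussianReal 0 1).prod ((gaussianReal 0 1).prod (gaussianReal 0 1)))
    (lamE lamB ν : ℝ × ℝ × ℝ → ℝ)
    (hlamE : lamE = fun ω => Real.sqrt qe * ω.1)
    (hlamB : lamB = fun ω => (m / Real.sqrt qe) * ω.1 + Real.sqrt (qb - m ^ 2 / qe) * ω.2.1)
    (hν : ν = fun ω => lamB ω + Real.sqrt (1 - qb) * ω.2.2)
    (F : MeasurableSpace (ℝ × ℝ × ℝ))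
    (hF : F = MeasurableSpace.comap lamE (inferInstance : MeasurableSpace ℝ))
    (τ' : ℝ) (hτ' : τ' = Real.sqrt (τ ^ 2 + 1 - qb)) :
    (μ[(fun ω => sigmaStar (ν ω / τ)) | F]
        =ᵐ[μ] fun ω => sigmaStar ((m / qe) * lamE ω / Real.sqrt (τ ^ 2 + 1 - m ^ 2 / qe))) ∧
    (μ[(fun ω => sigmaStar (lamB ω / τ')) | F]
        =ᵐ[μ] fun ω => sigmaStar ((m / qe) * lamE ω / Real.sqrt (τ ^ 2 + 1 - m ^ 2 / qe))) := by
  subst hμ hlamE hlamB hν hF hτ'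
  have hsqe : 0 < √qe := sqrt_pos.mpr hqe
  have hmq : m ^ 2 / qe ≤ qb := by rwa [div_le_iff₀ hqe]
  have hF : MeasurableSpace.comap (fun ω : ℝ × ℝ × ℝ => √qe * ω.1) inferInstance
      = MeasurableSpace.comap Prod.fst inferInstance := by
    rw [← Function.comp_def (√qe * ·), ← MeasurableSpace.comap_comp,
      (measurableEmbedding_mulLeft₀ hsqe.ne').comap_eq]
  have hmean : ∀ x, m / √qe * x = m / qe * (√qe * x) := fun x => by
    field_simp; rw [sq_sqrt hqe.le]; ring
  rw [hF]
  refine ⟨?_, ?_⟩ <;>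
    refine (condExp_comap_fst_prod_ae_eq _ _ (integrable_sigmaStar_comp_s2 (by fun_prop))).trans
      (ae_of_all _ fun ω => ?_) <;> dsimp only
  · rw [integral_sigmaStar_affine_prod _ _ _ hτ, sq_sqrt (by linarith), sq_sqrt (by linarith),
      hmean]
    congr 3; ring
  · rw [integral_fun_fst (fun z => sigmaStar ((_ + _ * z) / _)), probReal_univ, one_smul,
      integral_sigmaStar_affine _ _ (sqrt_pos.mpr (by nlinarith)), sq_sqrt (by nlinarith),
      sq_sqrt (by linarith), hmean]
    congr 3; ring

/-- For the jointly Gaussian triple `(ν, λ_b, λ_e)` with covariance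
`[[1, q_b, m], [q_b, q_b, m], [m, m, q_e]]`, realized on the product of three standard
Gaussians, the conditional expectations of the teacher confidence `σ⋆(ν/τ)` and of the
Bayes-optimal confidence `σ⋆(λ_b/τ')` (with `τ' = √(τ² + 1 − q_b)`) given `λ_e` coincide,
both being `σ⋆((m/q_e)·λ_e / √(τ² + 1 − m²/q_e))`.  In particular the calibration of the
logistic classifier with respect to the teacher equals that with respect to Bayes. -/
theorem condexp_teacher_eq_condexp_bayes_given_erm
    (τ qb qe m : ℝ) (hτ : 0 < τ) (hqb : 0 < qb) (hqb1 : qb ≤ 1) (hqe : 0 < qe)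
    (hm : m ^ 2 ≤ qb * qe)
    (μ : Measure (ℝ × ℝ × ℝ))
    (hμ : μ = (gaussianReal 0 1).prod ((gaussianReal 0 1).prod (gaussianReal 0 1)))
    (lamE lamB ν : ℝ × ℝ × ℝ → ℝ)
    (hlamE : lamE = fun ω => Real.sqrt qe * ω.1)
    (hlamB : lamB = fun ω => (m / Real.sqrt qe) * ω.1 + Real.sqrt (qb - m ^ 2 / qe) * ω.2.1)
    (hν : ν = fun ω => lamB ω + Real.sqrt (1 - qb) * ω.2.2)
    (F : MeasurableSpace (ℝ × ℝ × ℝ))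
    (hF : F = MeasurableSpace.comap lamE (inferInstance : MeasurableSpace ℝ))
    (τ' : ℝ) (hτ' : τ' = Real.sqrt (τ ^ 2 + 1 - qb)) :
    (μ[(fun ω => sigmaStar (ν ω / τ)) | F]
        =ᵐ[μ] fun ω => sigmaStar ((m / qe) * lamE ω / Real.sqrt (τ ^ 2 + 1 - m ^ 2 / qe))) ∧
    (μ[(fun ω => sigmaStar (lamB ω / τ')) | F]
        =ᵐ[μ] fun ω => sigmaStar ((m / qe) * lamE ω / Real.sqrt (τ ^ 2 + 1 - m ^ 2 / qe))) :=
  condexp_teacher_eq_condexp_bayes_given_erm_general τ qb qe m hτ hqb1 hqe hm μ hμ lamE lamB ν hlamE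
    hlamB hν F hF τ' hτ'
end
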